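/- For all α, β > 0, ν ∈ (0,1], integer n ≥ 1, and δ ≥ 2n + 1, consider f(x) = (max(0, 1 − x^ν))^δ for x ≥ 0. If (x,y) ↦ f(‖x−y‖₁) is positive definite on ℝ^{n+1} for δ ≥ 2(n+1) − 1 and ν ∈ (0,1], then for any metric space (T,d) isometrically ℓ¹-embeddable into ℝⁿ, the kernel C((s₁,t₁),(s₂,t₂)) = (max(0, 1 − (d(s₁,s₂)/α + |t₁−t₂|/β)^ν))^δ is positive definite on T × ℝ. -/

import Mathlib

/-!
The map `(s, t) ↦ (t / β, i s / α)` sends `T × ℝ` into `ℝ^{n+1}` so that the ℓ¹ distance of the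
images is exactly the space-time distance `d(s₁, s₂) / α + |t₁ - t₂| / β`. Hence the kernel on
`T × ℝ` is the pull-back of the positive definite kernel `f ∘ ‖· - ·‖₁` on `ℝ^{n+1}`, and positive
definiteness is preserved under pull-back.
-/

open Finset

def IsPosSemidefKernel {X : Type*} (K : X → X → ℝ) : Prop :=
  ∀ (N : ℕ) (a : Fin N → ℝ) (x : Fin N → X), 0 ≤ ∑ k, ∑ l, a k * a l * K (x k) (x l)

theorem IsPosSemidefKernel.comp {X Y : Type*} {K : X → X → ℝ} (hK : IsPosSemidefKernel K)
    (φ : Y → X) : IsPosSemidefKernel fun y y' => K (φ y) (φ y') :=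
  fun N a y => hK N a (φ ∘ y)

theorem sum_abs_cons_sub_cons {n : ℕ} (a b : ℝ) (x y : Fin n → ℝ) :
    ∑ m, |(Fin.cons a x : Fin (n + 1) → ℝ) m - (Fin.cons b y : Fin (n + 1) → ℝ) m|
      = |a - b| + ∑ m, |x m - y m| := by
  simp only [Fin.sum_univ_succ, Fin.cons_zero, Fin.cons_succ]

theorem sum_abs_div_sub_div {ι : Type*} [Fintype ι] {c : ℝ} (hc : 0 < c) (x y : ι → ℝ) :
    ∑ m, |x m / c - y m / c| = (∑ m, |x m - y m|) / c := by
  simp_rw [div_sub_div_same, abs_div, abs_of_pos hc, sum_div]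

noncomputable def spaceTimeEmbedding {T : Type*} {n : ℕ} (α β : ℝ) (i : T → (Fin n → ℝ))
    (q : T × ℝ) : Fin (n + 1) → ℝ :=
  Fin.cons (q.2 / β) fun m => i q.1 m / α

theorem sum_abs_sub_spaceTimeEmbedding {T : Type*} [PseudoMetricSpace T] {n : ℕ} {α β : ℝ}
    (hα : 0 < α) (hβ : 0 < β) (i : T → (Fin n → ℝ))
    (hi : ∀ s₁ s₂ : T, dist s₁ s₂ = ∑ k, |i s₁ k - i s₂ k|) (p q : T × ℝ) :
    ∑ m, |spaceTimeEmbedding α β i p m - spaceTimeEmbedding α β i q m|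
      = dist p.1 q.1 / α + |p.2 - q.2| / β := by
  rw [spaceTimeEmbedding, spaceTimeEmbedding, sum_abs_cons_sub_cons, div_sub_div_same, abs_div,
    abs_of_pos hβ, sum_abs_div_sub_div hα, hi, add_comm]

theorem stmt_19_general {T : Type*} [MetricSpace T] (n : ℕ)
    (α β ν δ : ℝ) (hα : 0 < α) (hβ : 0 < β)
    (i : T → (Fin n → ℝ))
    (hi : ∀ s₁ s₂ : T, dist s₁ s₂ = ∑ k, |i s₁ k - i s₂ k|)
    (hf : ∀ (N : ℕ) (a : Fin N → ℝ) (x : Fin N → (Fin (n + 1) → ℝ)),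
      0 ≤ ∑ k, ∑ l, a k * a l *
        (max 0 (1 - (∑ m, |x k m - x l m|) ^ ν)) ^ δ) :
    ∀ (N : ℕ) (a : Fin N → ℝ) (p : Fin N → T × ℝ),
      0 ≤ ∑ k, ∑ l, a k * a l *
        (max 0 (1 - (dist (p k).1 (p l).1 / α + |(p k).2 - (p l).2| / β) ^ ν)) ^ δ := by
  have hK : IsPosSemidefKernel fun x y : Fin (n + 1) → ℝ =>
      (max 0 (1 - (∑ m, |x m - y m|) ^ ν)) ^ δ := hf
  intro N a p
  simpa only [sum_abs_sub_spaceTimeEmbedding hα hβ i hi] using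
    hK.comp (spaceTimeEmbedding α β i) N a p

theorem stmt_19 {T : Type*} [MetricSpace T] (n : ℕ) (hn : 1 ≤ n)
    (α β ν δ : ℝ) (hα : 0 < α) (hβ : 0 < β)
    (hν : 0 < ν) (hν' : ν ≤ 1) (hδ : 2 * (n : ℝ) + 1 ≤ δ)
    (i : T → (Fin n → ℝ))
    (hi : ∀ s₁ s₂ : T, dist s₁ s₂ = ∑ k, |i s₁ k - i s₂ k|)
    (hf : ∀ (N : ℕ) (a : Fin N → ℝ) (x : Fin N → (Fin (n + 1) → ℝ)),
      0 ≤ ∑ k, ∑ l, a k * a l *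
        (max 0 (1 - (∑ m, |x k m - x l m|) ^ ν)) ^ δ) :
    ∀ (N : ℕ) (a : Fin N → ℝ) (p : Fin N → T × ℝ),
      0 ≤ ∑ k, ∑ l, a k * a l *
        (max 0 (1 - (dist (p k).1 (p l).1 / α + |(p k).2 - (p l).2| / β) ^ ν)) ^ δ :=
  stmt_19_general n α β ν δ hα hβ i hi hf
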